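/- Let m ≥ 2 be an integer, κ ∈ ℝ, λ > 0, α > 0, and R > 0 with √κ·R < π when κ > 0. Let u : [0,R] → ℝ be smooth (the restriction of a C^∞ function on an open interval containing [0,R]), positive on [0,R], with u'(0) = 0, u'(R) + α·u(R) = 0, and satisfying the ODE u''(r) + (m−1)·(sn_κ'(r)/sn_κ(r))·u'(r) = −λ·u(r) for all r ∈ (0,R). Then the function r ↦ u'(r)/u(r) is monotone decreasing (antitone) on (0,R], and in particular u'(r) ≥ −α·u(r) for every r ∈ (0,R]. -/

import Mathlib

open Set Filter

/-- The generalized sine function `sn_κ` of the simply connected space form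
of constant sectional curvature `κ`. -/
noncomputable def sn (κ : ℝ) : ℝ → ℝ := fun r =>
  if 0 < κ then Real.sin (Real.sqrt κ * r) / Real.sqrt κ
  else if κ = 0 then r
  else Real.sinh (Real.sqrt (-κ) * r) / Real.sqrt (-κ)

/-- The generalized cosine function. -/
noncomputable def cs (κ : ℝ) : ℝ → ℝ := fun r =>
  if 0 < κ then Real.cos (Real.sqrt κ * r)
  else if κ = 0 then 1
  else Real.cosh (Real.sqrt (-κ) * r)

lemma sn_zero (κ : ℝ) : sn κ 0 = 0 := by
  unfold sn; split_ifs <;> simp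

lemma sn_hasDerivAt (κ r : ℝ) : HasDerivAt (sn κ) (cs κ r) r := by
  rcases lt_trichotomy 0 κ with h | h | h
  · have hκ : (0:ℝ) < Real.sqrt κ := Real.sqrt_pos.mpr h
    have heq : sn κ = fun x => Real.sin (Real.sqrt κ * x) / Real.sqrt κ := by
      funext x; simp [sn, h]
    rw [heq]
    have hin : HasDerivAt (fun x : ℝ => Real.sqrt κ * x) (Real.sqrt κ) r := by
      simpa using (hasDerivAt_id r).const_mul (Real.sqrt κ)
    have hd := ((Real.hasDerivAt_sin (Real.sqrt κ * r)).comp r hin).div_const (Real.sqrt κ)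
    have : Real.cos (Real.sqrt κ * r) * Real.sqrt κ / Real.sqrt κ = cs κ r := by
      field_simp [cs, h]
      simp [cs, h]
    rwa [this] at hd
  · have heq : sn κ = fun x => x := by funext x; simp [sn, h.symm, lt_irrefl]
    have hcs : cs κ r = 1 := by simp [cs, h.symm, lt_irrefl]
    rw [heq, hcs]; exact hasDerivAt_id r
  · have hκ : (0:ℝ) < Real.sqrt (-κ) := Real.sqrt_pos.mpr (by linarith)
    have hnl : ¬ (0:ℝ) < κ := by linarith
    have heq : sn κ = fun x => Real.sinh (Real.sqrt (-κ) * x) / Real.sqrt (-κ) := by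
      funext x; simp [sn, hnl, ne_of_lt h]
    rw [heq]
    have hin : HasDerivAt (fun x : ℝ => Real.sqrt (-κ) * x) (Real.sqrt (-κ)) r := by
      simpa using (hasDerivAt_id r).const_mul (Real.sqrt (-κ))
    have hd := ((Real.hasDerivAt_sinh (Real.sqrt (-κ) * r)).comp r hin).div_const (Real.sqrt (-κ))
    have : Real.cosh (Real.sqrt (-κ) * r) * Real.sqrt (-κ) / Real.sqrt (-κ) = cs κ r := by
      field_simp [cs, hnl, ne_of_lt h]
      simp [cs, hnl, ne_of_lt h]
    rwa [this] at hd

lemma cs_hasDerivAt (κ r : ℝ) : HasDerivAt (cs κ) (-κ * sn κ r) r := by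
  rcases lt_trichotomy 0 κ with h | h | h
  · have hκ : (0:ℝ) < Real.sqrt κ := Real.sqrt_pos.mpr h
    have hsq : Real.sqrt κ * Real.sqrt κ = κ := Real.mul_self_sqrt h.le
    have heq : cs κ = fun x => Real.cos (Real.sqrt κ * x) := by
      funext x; simp [cs, h]
    rw [heq]
    have hin : HasDerivAt (fun x : ℝ => Real.sqrt κ * x) (Real.sqrt κ) r := by
      simpa using (hasDerivAt_id r).const_mul (Real.sqrt κ)
    have hd := (Real.hasDerivAt_cos (Real.sqrt κ * r)).comp r hin
    have : -Real.sin (Real.sqrt κ * r) * Real.sqrt κ = -κ * sn κ r := by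
      simp only [sn, if_pos h]
      field_simp
      linear_combination -Real.sin (Real.sqrt κ * r) * hsq
    rwa [this] at hd
  · have heq : cs κ = fun _ => (1:ℝ) := by funext x; simp [cs, h.symm, lt_irrefl]
    have hsn : -κ * sn κ r = 0 := by simp [← h]
    rw [heq, hsn]; exact hasDerivAt_const r 1
  · have hκ : (0:ℝ) < Real.sqrt (-κ) := Real.sqrt_pos.mpr (by linarith)
    have hsq : Real.sqrt (-κ) * Real.sqrt (-κ) = -κ := Real.mul_self_sqrt (by linarith)
    have hnl : ¬ (0:ℝ) < κ := by linarith
    have heq : cs κ = fun x => Real.cosh (Real.sqrt (-κ) * x) := by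
      funext x; simp [cs, hnl, ne_of_lt h]
    rw [heq]
    have hin : HasDerivAt (fun x : ℝ => Real.sqrt (-κ) * x) (Real.sqrt (-κ)) r := by
      simpa using (hasDerivAt_id r).const_mul (Real.sqrt (-κ))
    have hd := (Real.hasDerivAt_cosh (Real.sqrt (-κ) * r)).comp r hin
    have : Real.sinh (Real.sqrt (-κ) * r) * Real.sqrt (-κ) = -κ * sn κ r := by
      simp only [sn, if_neg hnl, if_neg (ne_of_lt h)]
      field_simp
      linear_combination Real.sinh (Real.sqrt (-κ) * r) * hsq
    rwa [this] at hd

lemma sn_pyth (κ r : ℝ) : κ * (sn κ r) ^ 2 + (cs κ r) ^ 2 = 1 := by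
  rcases lt_trichotomy 0 κ with h | h | h
  · have hκ : (0:ℝ) < Real.sqrt κ := Real.sqrt_pos.mpr h
    have hsq : Real.sqrt κ * Real.sqrt κ = κ := Real.mul_self_sqrt h.le
    simp only [sn, cs, if_pos h]
    have hpy := Real.sin_sq_add_cos_sq (Real.sqrt κ * r)
    field_simp
    try nlinarith [hpy]
  · simp [sn, cs, h.symm, lt_irrefl]
  · have hκ : (0:ℝ) < Real.sqrt (-κ) := Real.sqrt_pos.mpr (by linarith)
    have hsq : Real.sqrt (-κ) * Real.sqrt (-κ) = -κ := Real.mul_self_sqrt (by linarith)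
    have hnl : ¬ (0:ℝ) < κ := by linarith
    simp only [sn, cs, if_neg hnl, if_neg (ne_of_lt h)]
    have hpy := Real.cosh_sq_sub_sinh_sq (Real.sqrt (-κ) * r)
    field_simp
    nlinarith [hpy]

lemma sn_pos {κ r R : ℝ} (hr : 0 < r) (hrR : r ≤ R)
    (hκR : 0 < κ → Real.sqrt κ * R < Real.pi) : 0 < sn κ r := by
  rcases lt_trichotomy 0 κ with h | h | h
  · have hκ : (0:ℝ) < Real.sqrt κ := Real.sqrt_pos.mpr h
    simp only [sn, if_pos h]
    apply div_pos _ hκ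
    apply Real.sin_pos_of_pos_of_lt_pi (by positivity)
    calc Real.sqrt κ * r ≤ Real.sqrt κ * R := by nlinarith
      _ < Real.pi := hκR h
  · simpa [sn, h.symm, lt_irrefl] using hr
  · have hκ : (0:ℝ) < Real.sqrt (-κ) := Real.sqrt_pos.mpr (by linarith)
    have hnl : ¬ (0:ℝ) < κ := by linarith
    simp only [sn, if_neg hnl, if_neg (ne_of_lt h)]
    exact div_pos (by positivity) hκ

lemma continuous_sn (κ : ℝ) : Continuous (sn κ) :=
  continuous_iff_continuousAt.mpr fun r => (sn_hasDerivAt κ r).continuousAt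

lemma continuous_cs (κ : ℝ) : Continuous (cs κ) :=
  continuous_iff_continuousAt.mpr fun r => (cs_hasDerivAt κ r).continuousAt

lemma cast_mul_pow_sub_one {x : ℝ} (hx : x ≠ 0) (k : ℕ) :
    (k : ℝ) * x ^ (k - 1) = (k : ℝ) * x ^ k / x := by
  cases k with
  | zero => simp
  | succ n =>
    rw [Nat.add_sub_cancel, pow_succ]
    field_simp

/-- for a positive first Robin eigenfunction on a geodesic ball in the
space form of curvature `κ`, the logarithmic derivative `u'/u` is antitone on `(0, R]`,
and in particular `u' ≥ -α u` there. -/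
theorem stmt1 (m : ℕ) (hm : 2 ≤ m) (κ lam α R a b : ℝ)
    (hlam : 0 < lam) (hα : 0 < α) (hR : 0 < R)
    (hκR : 0 < κ → Real.sqrt κ * R < Real.pi)
    (ha : a < 0) (hb : R < b)
    (u : ℝ → ℝ) (hu : ContDiffOn ℝ (⊤ : ℕ∞) u (Set.Ioo a b))
    (hpos : ∀ r ∈ Set.Icc (0:ℝ) R, 0 < u r)
    (hu'0 : deriv u 0 = 0)
    (hbc : deriv u R + α * u R = 0)
    (hode : ∀ r ∈ Set.Ioo (0:ℝ) R,
      deriv (deriv u) r + ((m : ℝ) - 1) * (deriv (sn κ) r / sn κ r) * deriv u r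
        = -lam * u r) :
    AntitoneOn (fun r => deriv u r / u r) (Set.Ioc 0 R) ∧
      ∀ r ∈ Set.Ioc (0:ℝ) R, -α * u r ≤ deriv u r := by
  have hm1 : (0:ℝ) < (m : ℝ) - 1 := by
    have : (2:ℝ) ≤ (m:ℝ) := by exact_mod_cast hm
    linarith
  have hsub : Icc (0:ℝ) R ⊆ Ioo a b := fun r hr =>
    ⟨lt_of_lt_of_le ha hr.1, lt_of_le_of_lt hr.2 hb⟩
  have hO : IsOpen (Ioo a b) := isOpen_Ioo
  -- smoothness bookkeeping
  have hu1 : ContDiffOn ℝ (⊤ : ℕ∞) (deriv u) (Ioo a b) := hu.deriv_of_isOpen hO (by simp)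
  have hud : ∀ r ∈ Icc (0:ℝ) R, HasDerivAt u (deriv u r) r := fun r hr =>
    ((hu.differentiableOn (by simp)).differentiableAt (hO.mem_nhds (hsub hr))).hasDerivAt
  have hud' : ∀ r ∈ Icc (0:ℝ) R, HasDerivAt (deriv u) (deriv (deriv u) r) r := fun r hr =>
    ((hu1.differentiableOn (by simp)).differentiableAt (hO.mem_nhds (hsub hr))).hasDerivAt
  have hcu : ContinuousOn u (Icc 0 R) := (hu.continuousOn).mono hsub
  have hcu' : ContinuousOn (deriv u) (Icc 0 R) := (hu1.continuousOn).mono hsub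
  -- sn facts
  have hsP : ∀ r ∈ Ioc (0:ℝ) R, 0 < sn κ r := fun r hr => sn_pos hr.1 hr.2 hκR
  -- rewrite the ODE
  have hode' : ∀ r ∈ Ioo (0:ℝ) R, deriv (deriv u) r
      = -lam * u r - ((m:ℝ) - 1) * (cs κ r / sn κ r) * deriv u r := by
    intro r hr
    have h1 := hode r hr
    rw [(sn_hasDerivAt κ r).deriv] at h1
    linarith
  -- Step 1: u' < 0 on (0, R]
  set p : ℝ → ℝ := fun r => (sn κ r) ^ (m - 1) * deriv u r with hp
  have hpd : ∀ r ∈ Ioo (0:ℝ) R, HasDerivAt p (-lam * (sn κ r) ^ (m - 1) * u r) r := by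
    intro r hr
    have hsr : 0 < sn κ r := hsP r ⟨hr.1, hr.2.le⟩
    have h1 : HasDerivAt (fun x => (sn κ x) ^ (m - 1))
        (((m:ℝ) - 1) * (sn κ r) ^ (m - 2) * cs κ r) r := by
      have := (sn_hasDerivAt κ r).pow (m - 1)
      have hc : ((m - 1 : ℕ) : ℝ) = (m : ℝ) - 1 := by
        push_cast [Nat.cast_sub (by omega : 1 ≤ m)]; ring
      have he : m - 1 - 1 = m - 2 := by omega
      rwa [hc, he] at this
    have h2 := h1.mul (hud' r ⟨hr.1.le, hr.2.le⟩)
    have heq : ((m:ℝ) - 1) * (sn κ r) ^ (m - 2) * cs κ r * deriv u r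
        + (sn κ r) ^ (m - 1) * deriv (deriv u) r = -lam * (sn κ r) ^ (m - 1) * u r := by
      rw [hode' r hr]
      have hpow : (sn κ r) ^ (m - 1) = (sn κ r) ^ (m - 2) * sn κ r := by
        rw [← pow_succ]; congr 1; omega
      rw [hpow]
      field_simp
      ring
    rwa [heq] at h2
  have hpanti : StrictAntiOn p (Icc 0 R) := by
    apply strictAntiOn_of_deriv_neg (convex_Icc _ _)
    · exact (((continuous_sn κ).pow _).continuousOn).mul hcu'
    · intro r hr
      rw [interior_Icc] at hr
      rw [(hpd r hr).deriv]
      have hsr : 0 < sn κ r := hsP r ⟨hr.1, hr.2.le⟩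
      have hur : 0 < u r := hpos r ⟨hr.1.le, hr.2.le⟩
      have : 0 < (sn κ r) ^ (m - 1) := pow_pos hsr _
      have h2 : 0 < lam * sn κ r ^ (m - 1) * u r := by positivity
      linarith
  have hp0 : p 0 = 0 := by
    simp [hp, sn_zero, zero_pow (by omega : m - 1 ≠ 0)]
  have hu'neg : ∀ r ∈ Ioc (0:ℝ) R, deriv u r < 0 := by
    intro r hr
    have h1 : p r < p 0 := hpanti (left_mem_Icc.mpr hR.le) ⟨hr.1.le, hr.2⟩ hr.1
    rw [hp0] at h1
    have hsr : 0 < (sn κ r) ^ (m - 1) := pow_pos (hsP r hr) _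
    have h1' : sn κ r ^ (m - 1) * deriv u r < 0 := h1
    by_contra hc
    push_neg at hc
    nlinarith [mul_nonneg hsr.le hc]
  -- Step 2: the auxiliary function G
  set G : ℝ → ℝ := fun r => -lam * (sn κ r) ^ (m - 1) * (u r) ^ 2
      - ((m:ℝ) - 1) * (sn κ r) ^ (m - 2) * cs κ r * (u r * deriv u r)
      - (sn κ r) ^ (m - 1) * (deriv u r) ^ 2 with hG
  have hG0 : G 0 = 0 := by
    simp [hG, sn_zero, zero_pow (by omega : m - 1 ≠ 0), hu'0]
  have hGd : ∀ r ∈ Ioo (0:ℝ) R,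
      HasDerivAt G (((m:ℝ) - 1) * (sn κ r) ^ (m - 2) * u r * deriv u r / sn κ r) r := by
    obtain ⟨k, rfl⟩ : ∃ k, m = k + 2 := ⟨m - 2, by omega⟩
    intro r hr
    have hsr : 0 < sn κ r := hsP r ⟨hr.1, hr.2.le⟩
    have hsne : sn κ r ≠ 0 := hsr.ne'
    have hrI : r ∈ Icc (0:ℝ) R := ⟨hr.1.le, hr.2.le⟩
    have hA : HasDerivAt (fun x => (sn κ x) ^ (k + 2 - 1))
        (((k + 2 - 1 : ℕ) : ℝ) * (sn κ r) ^ (k + 2 - 1 - 1) * cs κ r) r := (sn_hasDerivAt κ r).pow _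
    have hB : HasDerivAt (fun x => (sn κ x) ^ (k + 2 - 2))
        (((k + 2 - 2 : ℕ) : ℝ) * (sn κ r) ^ (k + 2 - 2 - 1) * cs κ r) r := (sn_hasDerivAt κ r).pow _
    have hU := hud r hrI
    have hU' := hud' r hrI
    have hcomb := (((hA.const_mul (-lam)).mul (hU.pow 2)).sub
        ((((hB.const_mul (((k + 2 : ℕ) : ℝ) - 1)).mul (cs_hasDerivAt κ r)).mul
          (hU.mul hU')))).sub (hA.mul (hU'.pow 2))
    rw [hG]
    refine hcomb.congr_deriv ?_
    simp only [Pi.mul_apply, Pi.pow_apply]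
    rw [hode' r hr]
    simp only [show k + 2 - 1 = k + 1 from by omega, show k + 2 - 2 = k from by omega,
      show k + 1 - 1 = k from by omega, show k + 2 - 1 - 1 = k from by omega,
      show k + 2 - 2 - 1 = k - 1 from by omega, pow_one]
    set s := sn κ r with hs'
    set c := cs κ r with hc'
    have hκeq : κ = (1 - c ^ 2) / s ^ 2 := by
      have := sn_pyth κ r
      rw [← hs', ← hc'] at this
      field_simp
      linarith
    rw [hκeq, cast_mul_pow_sub_one hsne k, pow_succ]
    push_cast
    field_simp
    ring
  have hGcont : ContinuousOn G (Icc 0 R) := by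
    rw [hG]
    apply ContinuousOn.sub
    apply ContinuousOn.sub
    · exact ((continuous_const.mul ((continuous_sn κ).pow _)).continuousOn).mul (hcu.pow 2)
    · exact ((continuous_const.mul ((continuous_sn κ).pow _)).mul
        (continuous_cs κ)).continuousOn.mul (hcu.mul hcu')
    · exact ((continuous_sn κ).pow _).continuousOn.mul (hcu'.pow 2)
  have hGanti : StrictAntiOn G (Icc 0 R) := by
    apply strictAntiOn_of_deriv_neg (convex_Icc _ _) hGcont
    intro r hr
    rw [interior_Icc] at hr
    rw [(hGd r hr).deriv]
    have hsr : 0 < sn κ r := hsP r ⟨hr.1, hr.2.le⟩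
    have hur : 0 < u r := hpos r ⟨hr.1.le, hr.2.le⟩
    have hu'r : deriv u r < 0 := hu'neg r ⟨hr.1, hr.2.le⟩
    have hsk : 0 < (sn κ r) ^ (m - 2) := pow_pos hsr _
    apply div_neg_of_neg_of_pos _ hsr
    have h1 : 0 < ((m:ℝ) - 1) * (sn κ r) ^ (m - 2) * u r := by positivity
    nlinarith
  have hGneg : ∀ r ∈ Ioc (0:ℝ) R, G r < 0 := by
    intro r hr
    have h1 : G r < G 0 := hGanti (left_mem_Icc.mpr hR.le) ⟨hr.1.le, hr.2⟩ hr.1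
    rwa [hG0] at h1
  -- the key: derivative of u'/u is negative on (0, R)
  have hv'neg : ∀ r ∈ Ioo (0:ℝ) R, deriv (fun x => deriv u x / u x) r < 0 := by
    intro r hr
    have hrI : r ∈ Icc (0:ℝ) R := ⟨hr.1.le, hr.2.le⟩
    have hsr : 0 < sn κ r := hsP r ⟨hr.1, hr.2.le⟩
    have hur : 0 < u r := hpos r hrI
    have hq : HasDerivAt (fun x => deriv u x / u x)
        ((deriv (deriv u) r * u r - deriv u r * deriv u r) / (u r) ^ 2) r :=
      (hud' r hrI).div (hud r hrI) hur.ne'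
    rw [hq.deriv]
    apply div_neg_of_neg_of_pos _ (by positivity)
    have hGr : G r = (sn κ r) ^ (m - 1)
        * (deriv (deriv u) r * u r - deriv u r * deriv u r) := by
      have hpow : (sn κ r) ^ (m - 1) = (sn κ r) ^ (m - 2) * sn κ r := by
        rw [← pow_succ]; congr 1; omega
      rw [hG, hode' r hr]
      field_simp
      rw [hpow]
      ring
    have hGneg' := hGneg r ⟨hr.1, hr.2.le⟩
    rw [hGr] at hGneg'
    have hsk : 0 < (sn κ r) ^ (m - 1) := pow_pos hsr _
    nlinarith
  have hvcont : ContinuousOn (fun x => deriv u x / u x) (Ioc 0 R) := by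
    apply ContinuousOn.div (hcu'.mono Ioc_subset_Icc_self) (hcu.mono Ioc_subset_Icc_self)
    exact fun r hr => (hpos r (Ioc_subset_Icc_self hr)).ne'
  have hanti : StrictAntiOn (fun x => deriv u x / u x) (Ioc 0 R) := by
    apply strictAntiOn_of_deriv_neg (convex_Ioc _ _) hvcont
    intro r hr
    rw [interior_Ioc] at hr
    exact hv'neg r hr
  refine ⟨hanti.antitoneOn, ?_⟩
  intro r hr
  have huR : 0 < u R := hpos R (right_mem_Icc.mpr hR.le)
  have hur : 0 < u r := hpos r ⟨hr.1.le, hr.2⟩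
  have h2 : deriv u R / u R ≤ deriv u r / u r :=
    hanti.antitoneOn hr (right_mem_Ioc.mpr hR) hr.2
  have hvR : deriv u R / u R = -α := by
    rw [div_eq_iff huR.ne']
    linarith
  rw [hvR] at h2
  exact (le_div_iff₀ hur).mp h2
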